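/- (S-procedure for the trust-region problem) Let Q be a positive semidefinite n×n real matrix, v ∈ ℝⁿ. Then max over η in the closed Euclidean unit ball of η^⊤Qη + 2v^⊤η equals inf over λ > λ̄(Q) of λ + v^⊤(λI_n − Q)^{-1}v, where λ̄(Q) is the largest eigenvalue of Q. -/

import Mathlib

/-!
In an orthonormal eigenbasis of `Q` (eigenvalues `dᵢ`, `w = Uᵀv`) the problem is diagonal. For
`l > λ̄` put `x(l)ᵢ = wᵢ / (l - dᵢ)`; then for every `ξ`
  `l + Σ wᵢ² / (l - dᵢ) = Σ dᵢ ξᵢ² + 2 wᵀξ + l (1 - ‖ξ‖²) + Σ (l - dᵢ) (ξᵢ - x(l)ᵢ)²`,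
and since `l > λ̄ ≥ 0` the last two terms are nonnegative on the unit ball: this is weak duality.
Conversely, if `‖x(l)‖ ≤ 1`, moving `x(l)` along a top eigenvector onto the unit sphere gives a
feasible `ξ` whose duality gap is at most `(l - λ̄) (1 - ‖x(l)‖²)`. Either `‖x(λ̄ + ε)‖ ≤ 1` and
the gap is at most `ε`, or, since `‖x(l)‖ → 0`, the intermediate value theorem gives `l` with
`‖x(l)‖ = 1` and the gap vanishes.
-/

open Matrix

lemma exists_sq_add_two_mul_eq_and_sq_le (a c : ℝ) (hc : 0 ≤ c) :
    ∃ δ, δ ^ 2 + 2 * a * δ = c ∧ δ ^ 2 ≤ c := by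
  wlog ha : 0 ≤ a generalizing a
  · obtain ⟨δ, hδ, hδc⟩ := this (-a) (by linarith)
    exact ⟨-δ, by linarith, by linarith⟩
  set r := √(a ^ 2 + c)
  have hr : r ^ 2 = a ^ 2 + c := Real.sq_sqrt (by positivity)
  have har : a ≤ r := Real.le_sqrt_of_sq_le (by linarith)
  exact ⟨r - a, by nlinarith, by nlinarith⟩

namespace TrustRegion

open Finset Filter Topology

variable {ι : Type*} [Fintype ι]

def objective (A : Matrix ι ι ℝ) (v η : ι → ℝ) : ℝ := η ⬝ᵥ (A *ᵥ η) + 2 * (v ⬝ᵥ η)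

noncomputable def primal (A : Matrix ι ι ℝ) (v : ι → ℝ) : ℝ :=
  sSup {r | ∃ η, η ⬝ᵥ η ≤ 1 ∧ r = objective A v η}

noncomputable def dual [DecidableEq ι] (A : Matrix ι ι ℝ) (v : ι → ℝ) (l : ℝ) : ℝ :=
  l + v ⬝ᵥ ((l • 1 - A)⁻¹ *ᵥ v)

lemma transpose_mulVec_dotProduct (U : Matrix ι ι ℝ) (x y : ι → ℝ) :
    (Uᵀ *ᵥ x) ⬝ᵥ y = x ⬝ᵥ (U *ᵥ y) := by
  rw [dotProduct_comm, dotProduct_transpose_mulVec]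

lemma objective_transpose_mul_mul (U A : Matrix ι ι ℝ) (v η : ι → ℝ) :
    objective (Uᵀ * A * U) (Uᵀ *ᵥ v) η = objective A v (U *ᵥ η) := by
  rw [objective, objective, transpose_mulVec_dotProduct, ← mulVec_mulVec, ← mulVec_mulVec,
    dotProduct_comm, transpose_mulVec_dotProduct, dotProduct_comm]

section Orthogonal

variable [DecidableEq ι] {U : Matrix ι ι ℝ}

lemma mulVec_dotProduct_mulVec (hU : Uᵀ * U = 1) (x y : ι → ℝ) :
    (U *ᵥ x) ⬝ᵥ (U *ᵥ y) = x ⬝ᵥ y := by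
  rw [← transpose_mulVec_dotProduct, mulVec_mulVec, hU, one_mulVec]

lemma mulVec_transpose_mulVec (hU : Uᵀ * U = 1) (x : ι → ℝ) : U *ᵥ (Uᵀ *ᵥ x) = x := by
  rw [mulVec_mulVec, mul_eq_one_comm.mp hU, one_mulVec]

lemma primal_transpose_mul_mul (hU : Uᵀ * U = 1) (A : Matrix ι ι ℝ) (v : ι → ℝ) :
    primal (Uᵀ * A * U) (Uᵀ *ᵥ v) = primal A v := by
  unfold primal
  congr 1
  ext r
  constructor
  · rintro ⟨η, hη, rfl⟩
    exact ⟨U *ᵥ η, by rwa [mulVec_dotProduct_mulVec hU], objective_transpose_mul_mul U A v η⟩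
  · rintro ⟨η, hη, rfl⟩
    refine ⟨Uᵀ *ᵥ η, ?_, by rw [objective_transpose_mul_mul, mulVec_transpose_mulVec hU]⟩
    rwa [transpose_mulVec_dotProduct, mulVec_transpose_mulVec hU]

lemma dual_transpose_mul_mul (hU : Uᵀ * U = 1) (A : Matrix ι ι ℝ) (v : ι → ℝ) (l : ℝ) :
    dual (Uᵀ * A * U) (Uᵀ *ᵥ v) l = dual A v l := by
  have hconj : l • 1 - Uᵀ * A * U = Uᵀ * (l • 1 - A) * U := by
    rw [Matrix.mul_sub, Matrix.sub_mul, mul_smul_comm, mul_one, smul_mul_assoc, hU]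
  rw [dual, dual, hconj, Matrix.mul_inv_rev, Matrix.mul_inv_rev, inv_eq_left_inv hU,
    inv_eq_left_inv (mul_eq_one_comm.mp hU), transpose_mulVec_dotProduct, ← mulVec_mulVec,
    ← mulVec_mulVec]
  simp only [mulVec_transpose_mulVec hU]

end Orthogonal

section StationaryPoint

variable (d w : ι → ℝ)

/-- The critical point `(l • 1 - diagonal d)⁻¹ *ᵥ w` of the Lagrangian
`objective (diagonal d) w ξ + l * (1 - ξ ⬝ᵥ ξ)`. -/
noncomputable def stationaryPoint (l : ℝ) : ι → ℝ := fun i => w i / (l - d i)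

lemma tendsto_stationaryPoint_dotProduct_self :
    Tendsto (fun l => stationaryPoint d w l ⬝ᵥ stationaryPoint d w l) atTop (𝓝 0) := by
  have hx (i : ι) : Tendsto (fun l => stationaryPoint d w l i) atTop (𝓝 0) :=
    tendsto_const_nhds.div_atTop (tendsto_atTop_add_const_right _ _ tendsto_id)
  simpa [dotProduct] using tendsto_finsetSum univ fun i _ => (hx i).mul (hx i)

lemma continuousOn_stationaryPoint_dotProduct_self {T : ℝ} (hdT : ∀ i, d i ≤ T) :
    ContinuousOn (fun l => stationaryPoint d w l ⬝ᵥ stationaryPoint d w l) (Set.Ioi T) := by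
  have hx (i : ι) : ContinuousOn (fun l => stationaryPoint d w l i) (Set.Ioi T) :=
    continuousOn_const.div (continuousOn_id.sub continuousOn_const) fun l hl =>
      (sub_pos.mpr ((hdT i).trans_lt hl)).ne'
  exact continuousOn_finsetSum univ fun i _ => (hx i).mul (hx i)

lemma exists_stationaryPoint_dotProduct_self_eq_one {T l₀ : ℝ} (hdT : ∀ i, d i ≤ T)
    (hl₀ : T < l₀) (h : 1 ≤ stationaryPoint d w l₀ ⬝ᵥ stationaryPoint d w l₀) :
    ∃ l, l₀ ≤ l ∧ stationaryPoint d w l ⬝ᵥ stationaryPoint d w l = 1 := by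
  obtain ⟨L, hL, hl₀L⟩ := ((tendsto_stationaryPoint_dotProduct_self d w).eventually
    (gt_mem_nhds one_pos) |>.and (eventually_ge_atTop l₀)).exists
  obtain ⟨l, hl, hl1⟩ := intermediate_value_Icc' hl₀L
    ((continuousOn_stationaryPoint_dotProduct_self d w hdT).mono
      fun l hl => hl₀.trans_le hl.1) ⟨hL.le, h⟩
  exact ⟨l, hl.1, hl1⟩

lemma exists_stationaryPoint_gap_le {T ε : ℝ} (hdT : ∀ i, d i ≤ T) (hε : 0 < ε) :
    ∃ l, T < l ∧ stationaryPoint d w l ⬝ᵥ stationaryPoint d w l ≤ 1 ∧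
      (l - T) * (1 - stationaryPoint d w l ⬝ᵥ stationaryPoint d w l) ≤ ε := by
  by_cases h : stationaryPoint d w (T + ε) ⬝ᵥ stationaryPoint d w (T + ε) ≤ 1
  · refine ⟨T + ε, by linarith, h, ?_⟩
    have := dotProduct_self_star_nonneg (stationaryPoint d w (T + ε))
    simp only [star_trivial] at this
    nlinarith
  · obtain ⟨l, hl, hl1⟩ := exists_stationaryPoint_dotProduct_self_eq_one d w hdT
      (lt_add_of_pos_right T hε) (not_le.mp h).le
    exact ⟨l, by linarith, hl1.le, by rw [hl1]; linarith⟩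

end StationaryPoint

section Diagonal

variable [DecidableEq ι] (d w : ι → ℝ) {l : ℝ}

lemma inv_smul_one_sub_diagonal (hl : ∀ i, d i ≠ l) :
    (l • 1 - diagonal d)⁻¹ = diagonal fun i => (l - d i)⁻¹ := by
  refine inv_eq_left_inv ?_
  rw [smul_one_eq_diagonal, diagonal_sub, diagonal_mul_diagonal, ← diagonal_one]
  exact congrArg diagonal (funext fun i => inv_mul_cancel₀ (sub_ne_zero.mpr (hl i).symm))

lemma dual_diagonal_eq_objective_add (hl : ∀ i, d i ≠ l) (ξ : ι → ℝ) :
    dual (diagonal d) w l = objective (diagonal d) w ξ + l * (1 - ξ ⬝ᵥ ξ) +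
      ∑ i, (l - d i) * (ξ i - stationaryPoint d w l i) ^ 2 := by
  have hsum : w ⬝ᵥ (diagonal (fun i => (l - d i)⁻¹) *ᵥ w) = ξ ⬝ᵥ (diagonal d *ᵥ ξ) +
      2 * (w ⬝ᵥ ξ) - l * (ξ ⬝ᵥ ξ) + ∑ i, (l - d i) * (ξ i - stationaryPoint d w l i) ^ 2 := by
    simp only [dotProduct, mulVec_diagonal, stationaryPoint, mul_sum, ← sum_add_distrib,
      ← sum_sub_distrib]
    refine sum_congr rfl fun i _ => ?_
    have := sub_ne_zero.mpr (hl i).symm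
    field_simp
    ring
  rw [dual, objective, inv_smul_one_sub_diagonal d hl, hsum]
  ring

lemma objective_diagonal_le_dual (hl₀ : 0 ≤ l) (hl : ∀ i, d i < l) {ξ : ι → ℝ}
    (hξ : ξ ⬝ᵥ ξ ≤ 1) : objective (diagonal d) w ξ ≤ dual (diagonal d) w l := by
  rw [dual_diagonal_eq_objective_add d w (fun i => (hl i).ne) ξ, add_assoc]
  refine le_add_of_nonneg_right (add_nonneg (mul_nonneg hl₀ (sub_nonneg.mpr hξ)) ?_)
  exact sum_nonneg fun i _ => mul_nonneg (sub_pos.mpr (hl i)).le (sq_nonneg _)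

lemma exists_dual_le_objective_add {i₀ : ι} (hi₀ : ∀ i, d i ≤ d i₀) (hl : d i₀ < l)
    (hx : stationaryPoint d w l ⬝ᵥ stationaryPoint d w l ≤ 1) :
    ∃ ξ, ξ ⬝ᵥ ξ = 1 ∧ dual (diagonal d) w l ≤ objective (diagonal d) w ξ +
      (l - d i₀) * (1 - stationaryPoint d w l ⬝ᵥ stationaryPoint d w l) := by
  set x := stationaryPoint d w l
  obtain ⟨δ, hδ, hδc⟩ := exists_sq_add_two_mul_eq_and_sq_le (x i₀) (1 - x ⬝ᵥ x) (by linarith)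
  set ξ := x + Pi.single i₀ δ
  have hξ : ξ ⬝ᵥ ξ = 1 := by
    simp only [ξ, add_dotProduct, dotProduct_add, dotProduct_single, single_dotProduct,
      Pi.add_apply, Pi.single_eq_same]
    linarith
  have hgap : ∑ i, (l - d i) * (ξ i - x i) ^ 2 = (l - d i₀) * δ ^ 2 := by
    refine (Fintype.sum_eq_single i₀ fun i hi => ?_).trans (by simp [ξ])
    simp [ξ, Pi.single_eq_of_ne hi]
  refine ⟨ξ, hξ, ?_⟩
  rw [dual_diagonal_eq_objective_add d w (fun i => ((hi₀ i).trans_lt hl).ne), hgap, hξ,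
    sub_self, mul_zero, add_zero]
  gcongr

theorem primal_diagonal_eq_iInf_dual {T : ℝ} (hT : IsGreatest (Set.range d) T) (hT₀ : 0 ≤ T) :
    primal (diagonal d) w = ⨅ l : {l : ℝ // T < l}, dual (diagonal d) w l := by
  obtain ⟨⟨i₀, rfl⟩, hdT⟩ := hT
  have hi₀ (i : ι) : d i ≤ d i₀ := hdT ⟨i, rfl⟩
  unfold primal
  set S := {r | ∃ η, η ⬝ᵥ η ≤ 1 ∧ r = objective (diagonal d) w η}
  have weak (l : {l : ℝ // d i₀ < l}) : ∀ r ∈ S, r ≤ dual (diagonal d) w l := by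
    rintro r ⟨η, hη, rfl⟩
    exact objective_diagonal_le_dual d w (hT₀.trans l.2.le) (fun i => (hi₀ i).trans_lt l.2) hη
  have hne : S.Nonempty := ⟨0, 0, by simp [objective]⟩
  have hbdd : BddAbove S := ⟨_, weak ⟨d i₀ + 1, lt_add_one _⟩⟩
  have : Nonempty {l : ℝ // d i₀ < l} := ⟨⟨d i₀ + 1, lt_add_one _⟩⟩
  refine le_antisymm (le_ciInf fun l => csSup_le hne (weak l))
    (le_of_forall_pos_le_add fun ε hε => ?_)
  obtain ⟨l, hl, hx, hgap⟩ := exists_stationaryPoint_gap_le d w hi₀ hε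
  obtain ⟨ξ, hξ, hle⟩ := exists_dual_le_objective_add d w hi₀ hl hx
  calc ⨅ l : {l : ℝ // d i₀ < l}, dual (diagonal d) w l
      ≤ dual (diagonal d) w l :=
        ciInf_le ⟨sSup S, Set.forall_mem_range.2 fun l => csSup_le hne (weak l)⟩ ⟨l, hl⟩
    _ ≤ _ := hle
    _ ≤ sSup S + ε := add_le_add (le_csSup hbdd ⟨ξ, hξ.le, rfl⟩) hgap

end Diagonal

lemma primal_eq_iInf_dual_of_isEmpty [IsEmpty ι] [DecidableEq ι] (A : Matrix ι ι ℝ)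
    (v : ι → ℝ) : primal A v = ⨅ l : {l : ℝ // 0 < l}, dual A v l := by
  have hS : {r | ∃ η, η ⬝ᵥ η ≤ 1 ∧ r = objective A v η} = {0} := by
    ext
    simp [objective, dotProduct]
  have hdual (l : ℝ) : dual A v l = l := by simp [dual, dotProduct]
  simp only [primal, hS, hdual, csSup_singleton]
  rw [iInf, Subtype.range_coe_subtype]
  exact csInf_Ioi.symm

end TrustRegion

open TrustRegion

theorem stmt5 {n : ℕ} (Q : Matrix (Fin n) (Fin n) ℝ) (hQ : Q.PosSemidef) (v : Fin n → ℝ) :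
    sSup {r : ℝ | ∃ η : Fin n → ℝ, η ⬝ᵥ η ≤ 1 ∧ r = η ⬝ᵥ (Q *ᵥ η) + 2 * (v ⬝ᵥ η)} =
      ⨅ l : {l : ℝ // (⨆ i, hQ.1.eigenvalues i) < l},
        (l : ℝ) + v ⬝ᵥ (((l : ℝ) • (1 : Matrix (Fin n) (Fin n) ℝ) - Q)⁻¹ *ᵥ v) := by
  rcases isEmpty_or_nonempty (Fin n) with hn | hn
  · rw [Real.iSup_of_isEmpty]
    exact primal_eq_iInf_dual_of_isEmpty Q v
  set U : Matrix (Fin n) (Fin n) ℝ := ↑hQ.1.eigenvectorUnitary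
  have hU : Uᵀ * U = 1 := by
    simpa [star_eq_conjTranspose] using Unitary.coe_star_mul_self hQ.1.eigenvectorUnitary
  have hQU : Uᵀ * Q * U = diagonal hQ.1.eigenvalues := by
    simpa [Unitary.conjStarAlgAut_apply, star_eq_conjTranspose] using
      hQ.1.conjStarAlgAut_star_eigenvectorUnitary
  have hT : IsGreatest (Set.range hQ.1.eigenvalues) (⨆ i, hQ.1.eigenvalues i) :=
    ⟨exists_eq_ciSup_of_finite, Set.forall_mem_range.2 fun i =>
      le_ciSup (Set.finite_range _).bddAbove i⟩
  have hT₀ : 0 ≤ ⨆ i, hQ.1.eigenvalues i := (hQ.eigenvalues_nonneg hn.some).trans (hT.2 ⟨_, rfl⟩)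
  have := primal_diagonal_eq_iInf_dual _ (Uᵀ *ᵥ v) hT hT₀
  simp only [← hQU, primal_transpose_mul_mul hU, dual_transpose_mul_mul hU] at this
  exact this
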